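/- arXiv:1809.07299 — 3 statements merged into one kernel-verified Lean document; each statement's English description precedes it below -/
import Mathlib

section
/- Let b ≥ 1 and 0 ≤ r < b be integers, and let γ₀ > 0 be a real number. Let X₍₁₎, …, X₍b₎ be integrable real-valued random variables on a probability space (interpreted as the ranks of the b referents ordered from best to worst) satisfying E[X₍i₎] = (γ₀/b)·i for every 1 ≤ i ≤ b. Let I be a uniformly random (b−r)-element subset of {1,…,b} (the indices of the available referents), independent of (X₍₁₎,…,X₍b₎). For 1 ≤ l ≤ b−r, let i_l denote the l-th smallest element of I. Then E[X₍i_l₎] = γ₀(b+1)l / (b(b−r+1)). -/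
/-!
Since `I` is independent of the ranks and uniform on the `m`-subsets (`m = b - r`), the expected
rank of the referent with index `i_l` is the average over those subsets `s` of
`(γ₀ / b) (s_l + 1)`, where `s_l` is the `l`-th smallest element of `s ⊆ {0, …, b - 1}`.
The sum of `s_l + 1` over all `m`-subsets is `l · C(b + 1, m + 1)`, by induction on `b` along
Pascal's rule: adjoining a new maximum to an `(m - 1)`-subset changes its `l`-th smallest element
only when `l = m`. Then `(b + 1) C(b, m) = (m + 1) C(b + 1, m + 1)` gives the formula.
-/

open MeasureTheory ProbabilityTheory Finset
open scoped ENNReal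

instance finsetMeasurableSpace (α : Type*) : MeasurableSpace (Finset α) := ⊤

namespace Finset

theorem sort_insert_of_forall_lt {α : Type*} [LinearOrder α] {s : Finset α} {a : α}
    (h : ∀ x ∈ s, x < a) : (insert a s).sort (· ≤ ·) = s.sort (· ≤ ·) ++ [a] := by
  have hnodup : (s.sort (· ≤ ·) ++ [a]).Nodup :=
    List.nodup_append.2 ⟨s.sort_nodup _, List.nodup_singleton a, by
      simpa using fun x hx => (h x hx).ne⟩
  have hsorted : (s.sort (· ≤ ·) ++ [a]).Pairwise (· ≤ ·) :=
    List.pairwise_append.2 ⟨s.pairwise_sort _, List.pairwise_singleton _ a, by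
      simpa using fun x hx => (h x hx).le⟩
  rw [← (List.toFinset_sort (· ≤ ·) hnodup).2 hsorted]
  congr 1
  ext x
  simp

theorem sum_powersetCard_succ_insert {α β : Type*} [DecidableEq α] [AddCommMonoid β]
    {s : Finset α} {a : α} (ha : a ∉ s) (n : ℕ) (f : Finset α → β) :
    ∑ t ∈ powersetCard (n + 1) (insert a s), f t =
      ∑ t ∈ powersetCard (n + 1) s, f t + ∑ t ∈ powersetCard n s, f (insert a t) := by
  have hat {t : Finset α} (ht : t ∈ powersetCard n s) : a ∉ t :=
    fun h => ha ((mem_powersetCard.1 ht).1 h)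
  rw [powersetCard_succ_insert ha, sum_union, sum_image]
  · intro t ht t' ht' h
    rw [← erase_insert (hat ht), ← erase_insert (hat ht')]
    exact congrArg (·.erase a) h
  · refine disjoint_left.2 fun t ht ht' => ?_
    obtain ⟨u, -, rfl⟩ := mem_image.1 ht'
    exact ha ((mem_powersetCard.1 ht).1 (mem_insert_self a u))

theorem sum_getD_sort_powersetCard_range (b : ℕ) {m k : ℕ} (hk : k < m) :
    ∑ s ∈ (range b).powersetCard m, ((s.sort (· ≤ ·)).getD k 0 + 1) =
      (k + 1) * (b + 1).choose (m + 1) := by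
  induction b generalizing m with
  | zero =>
    rw [powersetCard_eq_empty.2 (by rw [card_range]; omega), sum_empty,
      Nat.choose_eq_zero_of_lt (by omega), mul_zero]
  | succ b ih =>
    obtain ⟨m, rfl⟩ : ∃ m', m = m' + 1 := ⟨m - 1, by omega⟩
    have hsort {t : Finset ℕ} (ht : t ∈ (range b).powersetCard m) :
        (insert b t).sort (· ≤ ·) = t.sort (· ≤ ·) ++ [b] :=
      sort_insert_of_forall_lt fun x hx => mem_range.1 ((mem_powersetCard.1 ht).1 hx)
    have hlen {t : Finset ℕ} (ht : t ∈ (range b).powersetCard m) :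
        (t.sort (· ≤ ·)).length = m := by
      rw [length_sort, (mem_powersetCard.1 ht).2]
    rw [range_add_one, sum_powersetCard_succ_insert notMem_range_self, ih hk]
    rcases Nat.lt_or_ge k m with hkm | hkm
    · have hnew : ∀ t ∈ (range b).powersetCard m,
          ((insert b t).sort (· ≤ ·)).getD k 0 + 1 = (t.sort (· ≤ ·)).getD k 0 + 1 := by
        intro t ht
        rw [hsort ht, List.getD_append _ _ _ _ ((hlen ht).symm ▸ hkm)]
      rw [sum_congr rfl hnew, ih hkm, Nat.choose_succ_succ' (b + 1) (m + 1)]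
      ring
    · obtain rfl : k = m := by omega
      have hnew : ∀ t ∈ (range b).powersetCard k,
          ((insert b t).sort (· ≤ ·)).getD k 0 + 1 = b + 1 := by
        intro t ht
        rw [hsort ht, List.getD_append_right _ _ _ _ (hlen ht).le, hlen ht, Nat.sub_self]
        rfl
      rw [sum_congr rfl hnew, sum_const, card_powersetCard, card_range, smul_eq_mul,
        Nat.choose_succ_succ' (b + 1) (k + 1), mul_comm (b.choose k), Nat.add_one_mul_choose_eq]
      ring

theorem sum_getD_sort_powersetCard_univ_fin {b : ℕ} (d : Fin b) {m k : ℕ} (hk : k < m) :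
    ∑ s ∈ (univ : Finset (Fin b)).powersetCard m, (((s.sort (· ≤ ·)).getD k d : ℕ) + 1) =
      (k + 1) * (b + 1).choose (m + 1) := by
  rw [← sum_getD_sort_powersetCard_range b hk, ← Nat.Iio_eq_range, ← Fin.map_valEmbedding_univ,
    powersetCard_map, sum_map]
  refine sum_congr rfl fun s hs => ?_
  have hlen : k < (s.sort (· ≤ ·)).length := by
    rwa [length_sort, (mem_powersetCard_univ.1 hs)]
  rw [RelEmbedding.coe_toEmbedding, mapEmbedding_apply,
    ← (Fin.val_strictMono.strictMonoOn _).map_finsetSort, List.getD_eq_getElem _ _ hlen,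
    List.getD_eq_getElem _ _ (by simpa using hlen), List.getElem_map]
  rfl

end Finset

section RandomIndex

variable {Ω β ι : Type*} [MeasurableSpace Ω] {μ : Measure Ω} [MeasurableSpace β]
  {I : Ω → β} {X : ι → Ω → ℝ}

theorem ProbabilityTheory.IndepFun.integral_indicator_preimage_eq_mul (hI : Measurable I)
    (hindep : IndepFun I (fun ω i => X i ω) μ) {t : Set β} (ht : MeasurableSet t) {i : ι}
    (hXi : AEStronglyMeasurable (X i) μ) :
    ∫ ω, (I ⁻¹' t).indicator (X i) ω ∂μ = μ.real (I ⁻¹' t) * ∫ ω, X i ω ∂μ := by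
  have hind : IndepFun (t.indicator (1 : β → ℝ) ∘ I) (X i) μ :=
    hindep.comp (measurable_one.indicator ht) (measurable_pi_apply i)
  have hmul := hind.integral_fun_mul_eq_mul_integral
    ((measurable_one.indicator ht).comp hI).aestronglyMeasurable hXi
  have hprod : (I ⁻¹' t).indicator (X i) = fun ω => (t.indicator 1 ∘ I) ω * X i ω := by
    funext ω
    by_cases hω : I ω ∈ t <;> simp [hω]
  rw [hprod, hmul, ← integral_indicator_one (hI ht)]
  rfl

theorem integral_comp_indepFun_index_of_ae_mem [MeasurableSingletonClass β] (hI : Measurable I)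
    (hX : ∀ i, Integrable (X i) μ) (hindep : IndepFun I (fun ω i => X i ω) μ)
    {𝒮 : Finset β} (h𝒮 : ∀ᵐ ω ∂μ, I ω ∈ 𝒮) (f : β → ι) :
    ∫ ω, X (f (I ω)) ω ∂μ = ∑ s ∈ 𝒮, μ.real (I ⁻¹' {s}) * ∫ ω, X (f s) ω ∂μ := by
  have hdecomp : (fun ω => X (f (I ω)) ω)
      =ᵐ[μ] fun ω => ∑ s ∈ 𝒮, (I ⁻¹' {s}).indicator (X (f s)) ω := by
    filter_upwards [h𝒮] with ω hω
    rw [sum_eq_single_of_mem (I ω) hω fun s _ hs =>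
      Set.indicator_of_notMem (s := I ⁻¹' {s}) (fun h => hs h.symm) _]
    exact (Set.indicator_of_mem (Set.mem_preimage.2 (Set.mem_singleton _)) _).symm
  rw [integral_congr_ae hdecomp,
    integral_finsetSum _ fun s _ => (hX (f s)).indicator (hI (measurableSet_singleton s))]
  exact sum_congr rfl fun s _ => hindep.integral_indicator_preimage_eq_mul hI
    (measurableSet_singleton s) (hX (f s)).aestronglyMeasurable

variable [IsProbabilityMeasure μ] [MeasurableSingletonClass β]

theorem ae_mem_of_measure_preimage_singleton_eq_inv_card (hI : Measurable I)
    {𝒮 : Finset β} (h𝒮 : 𝒮.Nonempty) (hunif : ∀ s ∈ 𝒮, μ (I ⁻¹' {s}) = (#𝒮 : ℝ≥0∞)⁻¹) :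
    ∀ᵐ ω ∂μ, I ω ∈ 𝒮 := by
  have hmeas : MeasurableSet (I ⁻¹' 𝒮) := hI 𝒮.measurableSet
  change ∀ᵐ ω ∂μ, ω ∈ I ⁻¹' 𝒮
  rw [ae_mem_iff_measure_eq hmeas.nullMeasurableSet, measure_univ,
    ← sum_measure_preimage_singleton _ fun s _ => hI (measurableSet_singleton s),
    sum_congr rfl hunif, sum_const, nsmul_eq_mul,
    ENNReal.mul_inv_cancel (by simpa using h𝒮.ne_empty) (by simp)]

theorem integral_comp_indepFun_index_of_uniform (hI : Measurable I)
    (hX : ∀ i, Integrable (X i) μ) (hindep : IndepFun I (fun ω i => X i ω) μ)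
    {𝒮 : Finset β} (h𝒮 : 𝒮.Nonempty) (hunif : ∀ s ∈ 𝒮, μ (I ⁻¹' {s}) = (#𝒮 : ℝ≥0∞)⁻¹)
    (f : β → ι) :
    ∫ ω, X (f (I ω)) ω ∂μ = (#𝒮 : ℝ)⁻¹ * ∑ s ∈ 𝒮, ∫ ω, X (f s) ω ∂μ := by
  rw [integral_comp_indepFun_index_of_ae_mem hI hX hindep
    (ae_mem_of_measure_preimage_singleton_eq_inv_card hI h𝒮 hunif), mul_sum]
  refine sum_congr rfl fun s hs => ?_
  rw [measureReal_def, hunif s hs, ENNReal.toReal_inv, ENNReal.toReal_natCast]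

end RandomIndex

theorem expected_rank_available_referent_general {Ω : Type*} [MeasurableSpace Ω] (μ : Measure Ω)
    [IsProbabilityMeasure μ]
    (b r : ℕ) (hb : 1 ≤ b) (hr : r < b) (γ₀ : ℝ)
    (X : Fin b → Ω → ℝ) (hXint : ∀ i, Integrable (X i) μ)
    (hXmean : ∀ i : Fin b, ∫ ω, X i ω ∂μ = (γ₀ / b) * ((i : ℕ) + 1))
    (I : Ω → Finset (Fin b)) (hImeas : Measurable I)
    (hIunif : ∀ s : Finset (Fin b), s.card = b - r →
      μ {ω | I ω = s} = ((b.choose (b - r) : ℝ≥0∞))⁻¹)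
    (hindep : IndepFun I (fun ω => fun i => X i ω) μ)
    (l : ℕ) (hl1 : 1 ≤ l) (hl2 : l ≤ b - r) :
    ∫ ω, X (((I ω).sort (· ≤ ·)).getD (l - 1) ⟨0, hb⟩) ω ∂μ
      = γ₀ * (b + 1) * l / (b * ((b : ℝ) - r + 1)) := by
  set 𝒮 := (univ : Finset (Fin b)).powersetCard (b - r)
  have hcard : #𝒮 = b.choose (b - r) := by simp [𝒮]
  have hunif (s) (hs : s ∈ 𝒮) : μ (I ⁻¹' {s}) = (#𝒮 : ℝ≥0∞)⁻¹ := by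
    rw [hcard]
    exact hIunif s (mem_powersetCard_univ.1 hs)
  have hranks : ∑ s ∈ 𝒮, ((((s.sort (· ≤ ·)).getD (l - 1) ⟨0, hb⟩ : Fin b) : ℕ) + 1 : ℝ) =
      l * (b + 1).choose (b - r + 1) := by
    have h := sum_getD_sort_powersetCard_univ_fin ⟨0, hb⟩ (by omega : l - 1 < b - r)
    rw [Nat.sub_add_cancel hl1] at h
    exact_mod_cast h
  have hpascal :
      ((b : ℝ) + 1) * b.choose (b - r) = (b + 1).choose (b - r + 1) * (b - r + 1) := by
    rw [← Nat.cast_sub hr.le]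
    exact_mod_cast Nat.add_one_mul_choose_eq b (b - r)
  rw [integral_comp_indepFun_index_of_uniform hImeas hXint hindep
    (powersetCard_nonempty.2 (by simp)) hunif fun s => (s.sort (· ≤ ·)).getD (l - 1) ⟨0, hb⟩]
  simp_rw [hXmean, ← mul_sum]
  rw [hranks, hcard]
  have hC : (b.choose (b - r) : ℝ) ≠ 0 :=
    Nat.cast_ne_zero.2 (Nat.choose_pos (Nat.sub_le b r)).ne'
  have hb0 : (b : ℝ) ≠ 0 := Nat.cast_ne_zero.2 (by omega)
  have hbr : (b : ℝ) - r + 1 ≠ 0 := by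
    have : (r : ℝ) < b := by exact_mod_cast hr
    linarith
  field_simp
  linear_combination -γ₀ * hpascal

/-- Proposition 1: expected rank of the `l`-th best available referent.
The referent ranks `X 0, …, X (b-1)` (best to worst) satisfy
`E[X i] = (γ₀/b)·(i+1)`; `I` is a uniformly random `(b−r)`-element subset of the
referent indices (the available referents), independent of the ranks.  Then the
expected rank of the referent whose index is the `l`-th smallest element of `I`
is `γ₀(b+1)l/(b(b−r+1))`. -/
theorem expected_rank_available_referent {Ω : Type*} [MeasurableSpace Ω] (μ : Measure Ω)
    [IsProbabilityMeasure μ]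
    (b r : ℕ) (hb : 1 ≤ b) (hr : r < b) (γ₀ : ℝ) (hγ₀ : 0 < γ₀)
    (X : Fin b → Ω → ℝ) (hXint : ∀ i, Integrable (X i) μ)
    (hXmean : ∀ i : Fin b, ∫ ω, X i ω ∂μ = (γ₀ / b) * ((i : ℕ) + 1))
    (I : Ω → Finset (Fin b)) (hImeas : Measurable I)
    (hIunif : ∀ s : Finset (Fin b), s.card = b - r →
      μ {ω | I ω = s} = ((b.choose (b - r) : ℝ≥0∞))⁻¹)
    (hindep : IndepFun I (fun ω => fun i => X i ω) μ)
    (l : ℕ) (hl1 : 1 ≤ l) (hl2 : l ≤ b - r) :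
    ∫ ω, X (((I ω).sort (· ≤ ·)).getD (l - 1) ⟨0, hb⟩) ω ∂μ
      = γ₀ * (b + 1) * l / (b * ((b : ℝ) - r + 1)) :=
  expected_rank_available_referent_general μ b r hb hr γ₀ X hXint hXmean I hImeas hIunif hindep l
    hl1 hl2
end

section
/- For natural numbers b and r with r < b, the following binomial identity holds: ∑_{i=1}^{r+1} i · C(b−i, r+1−i) = C(b+1, r), where C(·,·) denotes the binomial coefficient. -/
/-!
Writing `b = c + r + 1` and reflecting `i ↦ r + 1 - i`, the sum becomes
`∑_{j ≤ r} (r + 1 - j) · C(j + c, c)`. The weight `r + 1 - j` is the number of partial sums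
`∑_{j ≤ m} C(j + c, c)`, `m ≤ r`, containing the `j`-th term; so raising `r` by one adds one full
hockey-stick sum `C(r + c + 2, c + 1)`, and Pascal's rule gives `C(r + c + 2, c + 2) = C(b + 1, r)`.
-/

open Finset

theorem Nat.sum_range_succ_sub_mul_add_choose (n k : ℕ) :
    ∑ j ∈ range (n + 1), (n + 1 - j) * (j + k).choose k = (n + k + 2).choose (k + 2) := by
  induction n with
  | zero => simp
  | succ n ih =>
    have weight_succ : ∀ j ∈ range (n + 2),
        (n + 2 - j) * (j + k).choose k = (n + 1 - j) * (j + k).choose k + (j + k).choose k := by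
      intro j hj
      rw [mem_range] at hj
      rw [show n + 2 - j = n + 1 - j + 1 by omega, add_one_mul]
    calc ∑ j ∈ range (n + 1 + 1), (n + 1 + 1 - j) * (j + k).choose k
        = ∑ j ∈ range (n + 2), (n + 1 - j) * (j + k).choose k
            + ∑ j ∈ range (n + 2), (j + k).choose k := by
          rw [← sum_add_distrib]; exact sum_congr rfl weight_succ
      _ = (n + k + 2).choose (k + 2) + (n + k + 2).choose (k + 1) := by
          rw [sum_range_succ, ih, Nat.sum_range_add_choose, add_right_comm n 1 k]; simp
      _ = (n + 1 + k + 2).choose (k + 2) := by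
          rw [add_comm, show n + 1 + k + 2 = n + k + 2 + 1 by ring]
          exact (Nat.choose_succ_succ' (n + k + 2) (k + 1)).symm

/-- Binomial identity from the proof of Proposition 1:
`∑_{i=1}^{r+1} i · C(b−i, r+1−i) = C(b+1, r)` for `r < b`. -/
theorem sum_mul_choose_eq_choose_succ (b r : ℕ) (h : r < b) :
    ∑ i ∈ Finset.Icc 1 (r + 1), i * Nat.choose (b - i) (r + 1 - i)
      = Nat.choose (b + 1) r := by
  obtain ⟨c, rfl⟩ : ∃ c, b = c + r + 1 := ⟨b - r - 1, by omega⟩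
  have reflect : ∑ i ∈ Icc 1 (r + 1), i * (c + r + 1 - i).choose (r + 1 - i)
      = ∑ j ∈ range (r + 1), (r + 1 - j) * (j + c).choose c := by
    refine sum_nbij' (fun i ↦ r + 1 - i) (fun j ↦ r + 1 - j) ?_ ?_ ?_ ?_ ?_ <;>
      simp only [mem_Icc, mem_range]
    iterate 4 · intros; omega
    rintro i ⟨hi₁, hi₂⟩
    rw [show r + 1 - (r + 1 - i) = i by omega, show c + r + 1 - i = r + 1 - i + c by omega,
      Nat.choose_symm_add]
  rw [reflect, Nat.sum_range_succ_sub_mul_add_choose, show c + r + 1 + 1 = r + c + 2 by ring]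
  exact Nat.choose_symm_of_eq_add (by ring)
end

section
/- Le Cam's theorem: Let n ≥ 1, let p₁, …, p_n ∈ [0,1], and let Z₁, …, Z_n be independent random variables on a probability space with P(Z_i = 1) = p_i and P(Z_i = 0) = 1 − p_i for each i. Let S = ∑_{i=1}^n Z_i and λ = ∑_{i=1}^n p_i. Then ∑_{m=0}^{∞} | P(S = m) − λ^m e^{−λ} / m! | ≤ 2 ∑_{i=1}^n p_i². -/
open MeasureTheory ProbabilityTheory Finset

/-!
The law of a sum of independent ℕ-valued variables is the convolution of their laws, and
`Poisson(a) * Poisson(b) = Poisson(a + b)`, so both sides of the estimate are convolutions over the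
summands. For probability vectors the ℓ¹ distance is subadditive under convolution,
`‖f * g - f' * g'‖₁ ≤ ‖f - f'‖₁ + ‖g - g'‖₁`, which reduces the theorem to a single Bernoulli(q)
variable; its ℓ¹ distance to Poisson(q) is exactly `2q(1 - e^{-q}) ≤ 2q²`.
-/

namespace LeCam

noncomputable def poisson (a : ℝ) (m : ℕ) : ℝ := a ^ m * Real.exp (-a) / m.factorial

lemma poisson_nonneg {a : ℝ} (ha : 0 ≤ a) (m : ℕ) : 0 ≤ poisson a m := by
  unfold poisson; positivity

lemma hasSum_poisson (a : ℝ) : HasSum (poisson a) 1 := by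
  have h := (NormedSpace.expSeries_div_hasSum_exp a).mul_right (Real.exp (-a))
  rw [← Real.exp_eq_exp_ℝ, ← Real.exp_add, add_neg_cancel, Real.exp_zero] at h
  have hpoisson : poisson a = fun m => a ^ m / m.factorial * Real.exp (-a) :=
    funext fun m => by rw [poisson]; ring
  rwa [hpoisson]

def discreteConv (f g : ℕ → ℝ) (m : ℕ) : ℝ := ∑ kl ∈ antidiagonal m, f kl.1 * g kl.2

lemma discreteConv_poisson (a b : ℝ) :
    discreteConv (poisson a) (poisson b) = poisson (a + b) := by
  ext m
  rw [discreteConv, poisson, (Commute.all a b).add_pow', sum_mul, sum_div]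
  refine sum_congr rfl fun ⟨i, j⟩ hij => ?_
  rw [HasAntidiagonal.mem_antidiagonal] at hij
  subst hij
  rw [nsmul_eq_mul, Nat.cast_add_choose, neg_add, Real.exp_add, poisson, poisson]
  field_simp

lemma hasSum_discreteConv {f g : ℕ → ℝ} {a b : ℝ} (hf0 : 0 ≤ f) (hg0 : 0 ≤ g)
    (hf : HasSum f a) (hg : HasSum g b) : HasSum (discreteConv f g) (a * b) := by
  have hf' : Summable (‖f ·‖) := by simpa [Real.norm_of_nonneg (hf0 _)] using hf.summable
  have hg' : Summable (‖g ·‖) := by simpa [Real.norm_of_nonneg (hg0 _)] using hg.summable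
  rw [← hf.tsum_eq, ← hg.tsum_eq, tsum_mul_tsum_eq_tsum_sum_antidiagonal_of_summable_norm hf' hg']
  exact (summable_norm_sum_mul_antidiagonal_of_summable_norm hf' hg').of_norm.hasSum

lemma abs_discreteConv_sub_le {f f' g g' : ℕ → ℝ} (hg0 : 0 ≤ g) (hf'0 : 0 ≤ f') (m : ℕ) :
    |discreteConv f g m - discreteConv f' g' m|
      ≤ discreteConv (|f - f'|) g m + discreteConv f' (|g - g'|) m := by
  rw [discreteConv, discreteConv, discreteConv, discreteConv, ← sum_sub_distrib, ← sum_add_distrib]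
  refine (abs_sum_le_sum_abs _ _).trans (sum_le_sum fun kl _ => ?_)
  have hsplit : f kl.1 * g kl.2 - f' kl.1 * g' kl.2
      = (f kl.1 - f' kl.1) * g kl.2 + f' kl.1 * (g kl.2 - g' kl.2) := by ring
  rw [hsplit]
  refine (abs_add_le _ _).trans_eq ?_
  rw [abs_mul, abs_mul, abs_of_nonneg (hg0 _), abs_of_nonneg (hf'0 _)]
  rfl

lemma tsum_abs_discreteConv_sub_le {f f' g g' : ℕ → ℝ} (hf : Summable f) (hf' : HasSum f' 1)
    (hg : HasSum g 1) (hg' : Summable g') (hf'0 : 0 ≤ f') (hg0 : 0 ≤ g) :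
    ∑' m, |discreteConv f g m - discreteConv f' g' m|
      ≤ ∑' m, |f m - f' m| + ∑' m, |g m - g' m| := by
  have hF := (hf.sub hf'.summable).abs.hasSum
  have hG := (hg.summable.sub hg').abs.hasSum
  have hbound := (hasSum_discreteConv (fun _ => abs_nonneg _) hg0 hF hg).add
    (hasSum_discreteConv hf'0 (fun _ => abs_nonneg _) hf' hG)
  rw [mul_one, one_mul] at hbound
  exact hasSum_le (abs_discreteConv_sub_le hg0 hf'0)
    (hbound.summable.of_nonneg_of_le (fun _ => abs_nonneg _)
      (abs_discreteConv_sub_le hg0 hf'0)).hasSum hbound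

lemma tsum_abs_sub_poisson_le {f : ℕ → ℝ} {q : ℝ} (hf0 : 0 ≤ f) (hf : HasSum f 1)
    (h0 : f 0 = 1 - q) (h1 : f 1 = q) :
    ∑' m, |f m - poisson q m| ≤ 2 * q ^ 2 := by
  have hq : 0 ≤ q := h1 ▸ hf0 1
  set e := Real.exp (-q)
  have he1 : e ≤ 1 := Real.exp_le_one_iff.mpr (neg_nonpos.mpr hq)
  have he2 : 1 - q ≤ e := by linarith [Real.add_one_le_exp (-q)]
  have hπ := hasSum_poisson q
  have hπ0 : poisson q 0 = e := by simp [poisson, e]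
  have hπ1 : poisson q 1 = q * e := by simp [poisson, e]
  have hdiff := (hf.summable.sub hπ.summable).abs
  have htail := ((hasSum_nat_add_iff' 2).mpr hf).add ((hasSum_nat_add_iff' 2).mpr hπ)
  simp only [sum_range_succ, sum_range_zero, zero_add, h0, h1, hπ0, hπ1] at htail
  have htail_le : ∑' m, |f (m + 2) - poisson q (m + 2)| ≤ 1 - e - q * e := by
    refine (hasSum_le (fun m => ?_) ((summable_nat_add_iff 2).mpr hdiff).hasSum htail).trans_eq
      (by ring)
    refine (abs_sub _ _).trans_eq ?_
    rw [abs_of_nonneg (hf0 _), abs_of_nonneg (poisson_nonneg hq _)]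
  rw [← hdiff.sum_add_tsum_nat_add 2]
  simp only [sum_range_succ, sum_range_zero, zero_add, h0, h1, hπ0, hπ1]
  rw [abs_of_nonpos (by linarith), abs_of_nonneg (by nlinarith)]
  nlinarith [mul_le_mul_of_nonneg_left he2 hq]

section Law

variable {Ω : Type*} [MeasurableSpace Ω] (μ : Measure Ω)

def law (X : Ω → ℕ) (m : ℕ) : ℝ := μ.real (X ⁻¹' {m})

lemma law_nonneg (X : Ω → ℕ) : 0 ≤ law μ X := fun _ => measureReal_nonneg

lemma hasSum_law [IsProbabilityMeasure μ] {X : Ω → ℕ} (hX : Measurable X) :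
    HasSum (law μ X) 1 := by
  have h : ∑' m, μ (X ⁻¹' {m}) = 1 := by
    rw [← measure_iUnion (fun i j hij => (Set.disjoint_singleton.2 hij).preimage X)
      (fun m => hX (measurableSet_singleton m)), ← Set.preimage_iUnion,
      Set.iUnion_singleton_eq_range, Set.range_id', Set.preimage_univ, measure_univ]
  have hsum := ENNReal.hasSum_toReal (h ▸ ENNReal.one_ne_top)
  rwa [← ENNReal.tsum_toReal_eq (fun _ => measure_ne_top μ _), h, ENNReal.toReal_one] at hsum

lemma law_add_of_indepFun [IsFiniteMeasure μ] {X Y : Ω → ℕ} (hX : Measurable X)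
    (hY : Measurable Y) (h : IndepFun X Y μ) :
    law μ (X + Y) = discreteConv (law μ X) (law μ Y) := by
  ext m
  have hfiber : (X + Y) ⁻¹' {m} = ⋃ kl ∈ antidiagonal m, (fun ω => (X ω, Y ω)) ⁻¹' {kl} := by
    ext ω; simp
  rw [law, hfiber, measureReal_biUnion_finset (Set.pairwiseDisjoint_fiber _ _)
    (fun _ _ => (hX.prodMk hY) (measurableSet_singleton _))]
  refine sum_congr rfl fun ⟨k, l⟩ _ => ?_
  rw [← Set.singleton_prod_singleton, Set.mk_preimage_prod, measureReal_def,
    h.measure_inter_preimage_eq_mul _ _ (measurableSet_singleton _) (measurableSet_singleton _),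
    ENNReal.toReal_mul]
  rfl

lemma law_zero [IsProbabilityMeasure μ] : law μ (0 : Ω → ℕ) = poisson 0 := by
  ext m
  rcases m with _ | m <;> simp [law, poisson, Pi.zero_def]

lemma tsum_abs_law_sum_sub_poisson_le [IsProbabilityMeasure μ] {ι : Type*} {p : ι → ℝ}
    {Z : ι → Ω → ℕ} (hZ : ∀ i, Measurable (Z i)) (hindep : iIndepFun Z μ)
    (h1 : ∀ i, law μ (Z i) 1 = p i) (h0 : ∀ i, law μ (Z i) 0 = 1 - p i) (s : Finset ι) :
    ∑' m, |law μ (∑ i ∈ s, Z i) m - poisson (∑ i ∈ s, p i) m| ≤ 2 * ∑ i ∈ s, p i ^ 2 := by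
  classical
  induction s using Finset.induction_on with
  | empty => simp [law_zero]
  | insert a s ha ih =>
    have hp : 0 ≤ p a := h1 a ▸ law_nonneg μ (Z a) 1
    have hS : Measurable (∑ i ∈ s, Z i) := by fun_prop
    have hbern := tsum_abs_sub_poisson_le (law_nonneg μ _) (hasSum_law μ (hZ a)) (h0 a) (h1 a)
    rw [sum_insert ha, sum_insert ha, sum_insert ha, ← discreteConv_poisson,
      law_add_of_indepFun μ (hZ a) hS (hindep.indepFun_finsetSum_of_notMem hZ ha).symm]
    calc _ ≤ _ := tsum_abs_discreteConv_sub_le (hasSum_law μ (hZ a)).summable (hasSum_poisson _)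
            (hasSum_law μ hS) (hasSum_poisson _).summable (poisson_nonneg hp) (law_nonneg μ _)
      _ ≤ 2 * p a ^ 2 + 2 * ∑ i ∈ s, p i ^ 2 := add_le_add hbern ih
      _ = _ := by ring

end Law

end LeCam

theorem le_cam_general {Ω : Type*} [MeasurableSpace Ω] (μ : Measure Ω) [IsProbabilityMeasure μ]
    (n : ℕ) (p : Fin n → ℝ)
    (Z : Fin n → Ω → ℕ) (hZmeas : ∀ i, Measurable (Z i))
    (hindep : iIndepFun Z μ)
    (h1 : ∀ i, (μ {ω | Z i ω = 1}).toReal = p i)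
    (h0 : ∀ i, (μ {ω | Z i ω = 0}).toReal = 1 - p i) :
    ∑' m : ℕ,
        |(μ {ω | ∑ i, Z i ω = m}).toReal
          - (∑ i, p i) ^ m * Real.exp (-(∑ i, p i)) / (Nat.factorial m)|
      ≤ 2 * ∑ i, (p i) ^ 2 := by
  have h := LeCam.tsum_abs_law_sum_sub_poisson_le μ hZmeas hindep h1 h0 univ
  simpa only [LeCam.law, LeCam.poisson, measureReal_def, Set.preimage, Finset.sum_apply,
    Set.mem_singleton_iff] using h

/-- Le Cam's theorem: for independent Bernoulli random variables `Z i` with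
parameters `p i`, the ℓ¹ distance between the law of `S = ∑ Z i` and the
Poisson distribution with parameter `λ = ∑ p i` is at most `2 ∑ (p i)²`. -/
theorem le_cam {Ω : Type*} [MeasurableSpace Ω] (μ : Measure Ω) [IsProbabilityMeasure μ]
    (n : ℕ) (hn : 1 ≤ n) (p : Fin n → ℝ) (hp : ∀ i, p i ∈ Set.Icc (0 : ℝ) 1)
    (Z : Fin n → Ω → ℕ) (hZmeas : ∀ i, Measurable (Z i))
    (hindep : iIndepFun Z μ)
    (h1 : ∀ i, (μ {ω | Z i ω = 1}).toReal = p i)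
    (h0 : ∀ i, (μ {ω | Z i ω = 0}).toReal = 1 - p i) :
    ∑' m : ℕ,
        |(μ {ω | ∑ i, Z i ω = m}).toReal
          - (∑ i, p i) ^ m * Real.exp (-(∑ i, p i)) / (Nat.factorial m)|
      ≤ 2 * ∑ i, (p i) ^ 2 :=
  le_cam_general μ n p Z hZmeas hindep h1 h0
end
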